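/- arXiv:1705.03189 — 2 statements merged into one kernel-verified Lean document; each statement's English description precedes it below -/
import Mathlib

section
/- Given a right recollement (B, A, C, i_*, i^!, j^*, j_*) of abelian categories, the pair (Im i_*, Ker i^!) is a torsion pair in A: Hom(T, F) = 0 whenever T ∈ Im i_* and F ∈ Ker i^!, and every object A fits into an exact sequence 0 ⟶ i_* i^! A ⟶ A ⟶ coker(ω_A) ⟶ 0 with i_* i^! A ∈ Im i_* and coker(ω_A) ∈ Ker i^!, where ω is the counit of (i_*, i^!). -/
/-!
Since `i_*` is fully faithful, `i^!` inverts the counit `ω_X : i_* i^! X ⟶ X`, so the kernel of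
`ω_X` is killed by `i^!`; being killed by the exact functor `j^*` as well, it lies in `Im i_*`,
and `Hom(Im i_*, Ker i^!) = 0` forces it to vanish. For the cokernel `π : X ⟶ Q` of `ω_X`, pull
back a map `h : i_* Y ⟶ Q` along `π`. Since `j^* π` is mono and `j^*` kills `i_* Y`, the pullback
`P` is killed by `j^*`, so `P ∈ Im i_*`. Every map from `Im i_*` to `X` factors through `ω_X`,
so `P ⟶ X ⟶ Q` is zero, and as `P ⟶ i_* Y` is epi, `h = 0`. Hence `i^! Q = 0`.
-/

open CategoryTheory Limits

/-- A right recollement `(B, A, C, i_*, i^!, j^*, j_*)` of abelian categories: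
`i_*` and `j^*` are exact, `i_*` and `j_*` are fully faithful, `(i_*, i^!)` and
`(j^*, j_*)` are adjoint pairs, and the essential image of `i_*` is the kernel of `j^*`. -/
structure RightRecollement (B A C : Type*) [Category B] [Category A] [Category C]
    [Abelian B] [Abelian A] [Abelian C] where
  iStar : B ⥤ A
  iShriek : A ⥤ B
  jStar : A ⥤ C
  jLower : C ⥤ A
  iStar_preservesFiniteLimits : PreservesFiniteLimits iStar
  iStar_preservesFiniteColimits : PreservesFiniteColimits iStar
  jStar_preservesFiniteLimits : PreservesFiniteLimits jStar
  jStar_preservesFiniteColimits : PreservesFiniteColimits jStar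
  iStar_full : iStar.Full
  iStar_faithful : iStar.Faithful
  jLower_full : jLower.Full
  jLower_faithful : jLower.Faithful
  adj_i : iStar ⊣ iShriek
  adj_j : jStar ⊣ jLower
  im_eq_ker : ∀ X : A, (∃ Y : B, Nonempty (iStar.obj Y ≅ X)) ↔ IsZero (jStar.obj X)

namespace CategoryTheory.Adjunction

variable {C D : Type*} [Category C] [Category D] {F : C ⥤ D} {G : D ⥤ C}

theorem isZero_obj_iff_forall_eq_zero [HasZeroMorphisms C] [HasZeroMorphisms D] (adj : F ⊣ G)
    (Z : D) :
    IsZero (G.obj Z) ↔ ∀ (Y : C) (f : F.obj Y ⟶ Z), f = 0 := by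
  refine ⟨fun hZ Y f => (adj.homEquiv Y Z).injective (hZ.eq_of_tgt _ _), fun h => ?_⟩
  rw [IsZero.iff_id_eq_zero]
  exact (adj.homEquiv _ Z).symm.injective ((h _ _).trans (h _ _).symm)

theorem comp_eq_zero_of_counit_comp_eq_zero [HasZeroMorphisms D] (adj : F ⊣ G) {X Z : D}
    {g : X ⟶ Z} (hg : adj.counit.app X ≫ g = 0) {Y : C} (f : F.obj Y ⟶ X) : f ≫ g = 0 := by
  rw [← (adj.homEquiv Y X).symm_apply_apply f, homEquiv_counit, Category.assoc, hg, comp_zero]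

end CategoryTheory.Adjunction

namespace RightRecollement

variable {B A C : Type*} [Category B] [Category A] [Category C]
  [Abelian B] [Abelian A] [Abelian C] (R : RightRecollement B A C)

attribute [local instance] iStar_full iStar_faithful jStar_preservesFiniteLimits

theorem isZero_jStar_obj_iStar_obj (Y : B) : IsZero (R.jStar.obj (R.iStar.obj Y)) :=
  (R.im_eq_ker _).mp ⟨Y, ⟨Iso.refl _⟩⟩

theorem eq_zero_of_mem_essImage_of_isZero_iShriek {T F : A} (hT : R.iStar.essImage T)
    (hF : IsZero (R.iShriek.obj F)) (f : T ⟶ F) : f = 0 := by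
  obtain ⟨Y, ⟨e⟩⟩ := hT
  rw [← e.inv_hom_id_assoc f, (R.adj_i.isZero_obj_iff_forall_eq_zero F).mp hF Y (e.hom ≫ f),
    comp_zero]

theorem isZero_of_mem_essImage_of_isZero_iShriek {T : A} (hT : R.iStar.essImage T)
    (hT' : IsZero (R.iShriek.obj T)) : IsZero T :=
  (IsZero.iff_id_eq_zero T).mpr (R.eq_zero_of_mem_essImage_of_isZero_iShriek hT hT' _)

theorem mono_counit_app (X : A) : Mono (R.adj_i.counit.app X) := by
  have := R.adj_i.rightAdjoint_preservesLimits
  set ω := R.adj_i.counit.app X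
  have hShriek : IsZero (R.iShriek.obj (kernel ω)) :=
    (isZero_kernel_of_mono _).of_iso (PreservesKernel.iso R.iShriek ω)
  have hJStar : IsZero (R.jStar.obj (kernel ω)) :=
    (IsZero.of_mono (kernel.ι _) (R.isZero_jStar_obj_iStar_obj _)).of_iso
      (PreservesKernel.iso R.jStar ω)
  exact Preadditive.mono_of_isZero_kernel _
    (R.isZero_of_mem_essImage_of_isZero_iShriek ((R.im_eq_ker _).mpr hJStar) hShriek)

theorem mono_jStar_map_cokernel_π_counit (X : A) :
    Mono (R.jStar.map (cokernel.π (R.adj_i.counit.app X))) := by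
  have := R.mono_counit_app X
  exact Preadditive.mono_of_isZero_kernel' _
    (isLimitForkMapOfIsLimit' R.jStar _
      (Abelian.monoIsKernelOfCokernel _ (colimit.isColimit _)))
    (R.isZero_jStar_obj_iStar_obj _)

theorem isZero_jStar_obj_pullback_cokernel_π_counit (X : A) {Y : B}
    (h : R.iStar.obj Y ⟶ cokernel (R.adj_i.counit.app X)) :
    IsZero (R.jStar.obj (pullback (cokernel.π (R.adj_i.counit.app X)) h)) := by
  have := R.mono_jStar_map_cokernel_π_counit X
  have : Mono (R.jStar.map (pullback.snd (cokernel.π (R.adj_i.counit.app X)) h)) := by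
    rw [← PreservesPullback.iso_hom_snd R.jStar]
    infer_instance
  exact IsZero.of_mono (R.jStar.map (pullback.snd _ h)) (R.isZero_jStar_obj_iStar_obj Y)

theorem hom_iStar_obj_cokernel_counit_eq_zero (X : A) {Y : B}
    (h : R.iStar.obj Y ⟶ cokernel (R.adj_i.counit.app X)) : h = 0 := by
  set π := cokernel.π (R.adj_i.counit.app X)
  obtain ⟨W, ⟨e⟩⟩ := (R.im_eq_ker _).mpr (R.isZero_jStar_obj_pullback_cokernel_π_counit X h)
  have hfst : pullback.fst π h ≫ π = 0 := by
    rw [← e.inv_hom_id_assoc (pullback.fst π h), Category.assoc,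
      R.adj_i.comp_eq_zero_of_counit_comp_eq_zero (g := π) (cokernel.condition _), comp_zero]
  rw [← cancel_epi (pullback.snd π h), ← pullback.condition, hfst, comp_zero]

theorem isZero_iShriek_obj_cokernel_counit (X : A) :
    IsZero (R.iShriek.obj (cokernel (R.adj_i.counit.app X))) :=
  (R.adj_i.isZero_obj_iff_forall_eq_zero _).mpr fun _ =>
    R.hom_iStar_obj_cokernel_counit_eq_zero X

end RightRecollement

/-- `(Im i_*, Ker i^!)` is a torsion pair in `A`. -/
theorem stmt4 {B A C : Type*} [Category B] [Category A] [Category C]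
    [Abelian B] [Abelian A] [Abelian C] (R : RightRecollement B A C) :
    (∀ (T F : A), (∃ Y : B, Nonempty (R.iStar.obj Y ≅ T)) → IsZero (R.iShriek.obj F) →
      ∀ f : T ⟶ F, f = 0) ∧
    (∀ X : A, Mono (R.adj_i.counit.app X) ∧
      IsZero (R.iShriek.obj (cokernel (R.adj_i.counit.app X)))) :=
  ⟨fun _ _ hT hF => R.eq_zero_of_mem_essImage_of_isZero_iShriek hT hF,
    fun X => ⟨R.mono_counit_app X, R.isZero_iShriek_obj_cokernel_counit X⟩⟩
end

section
/- Let (U, V) and (V, W) be torsion pairs in an abelian category A with U closed under subobjects and W closed under quotient objects. Then U ∩ V = {0} and the assignment A ↦ (A_U, A^V) defines an equivalence of categories A ≃ U × V. -/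
open CategoryTheory Limits

variable {A : Type*} [Category A] [Abelian A]

/-- A torsion pair `(T, F)` in an abelian category: homs from `T`-objects to
`F`-objects vanish, and every object `X` admits a short exact sequence
`0 ⟶ T ⟶ X ⟶ F ⟶ 0` with `T ∈ T` and `F ∈ F` (encoded as: a mono `f : T ⟶ X`
with `T ∈ T` and `cokernel f ∈ F`). -/
structure TorsionPair (T F : A → Prop) : Prop where
  hom_zero : ∀ (X Y : A), T X → F Y → ∀ f : X ⟶ Y, f = 0
  decomp : ∀ X : A, ∃ (T₀ : A) (f : T₀ ⟶ X), Mono f ∧ T T₀ ∧ F (cokernel f)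

/-- Closed under subobjects. -/
def ClosedUnderSubobjects (P : A → Prop) : Prop :=
  ∀ (X Y : A) (f : X ⟶ Y), Mono f → P Y → P X

/-- Closed under quotient objects. -/
def ClosedUnderQuotients (P : A → Prop) : Prop :=
  ∀ (X Y : A) (f : X ⟶ Y), Epi f → P X → P Y

/-!
The two torsion pairs force `Hom(V, U) = 0`: the image of a map from a `V`-object to a
`U`-object lies in `U`, and being a quotient of a `V`-object it equals its own `(V, W)`-torsion
part, which is then in `U ∩ V = 0`. Moreover every `X` splits: with `0 ⟶ X_U ⟶ X ⟶ X^V ⟶ 0`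
and `S ⟶ X` the `(V, W)`-torsion part of `X`, the composite `S ⟶ X ⟶ X^V` is an isomorphism
(its kernel lies in `U ∩ V`, its cokernel in `V ∩ W`). Hence `X ≅ X_U ⊞ X^V`, and since `Hom`
vanishes between `U` and `V` in both directions, `(T, F) ↦ T ⊞ F` is an equivalence `U × V ≌ A`.
-/

lemma biprod.eq_map_of_inl_snd_eq_zero_of_inr_fst_eq_zero {C : Type*} [Category C]
    [Preadditive C] [HasBinaryBiproducts C] {X₁ X₂ Y₁ Y₂ : C} (φ : X₁ ⊞ X₂ ⟶ Y₁ ⊞ Y₂)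
    (h₁₂ : biprod.inl ≫ φ ≫ biprod.snd = 0) (h₂₁ : biprod.inr ≫ φ ≫ biprod.fst = 0) :
    φ = biprod.map (biprod.inl ≫ φ ≫ biprod.fst) (biprod.inr ≫ φ ≫ biprod.snd) := by
  ext <;> simp [h₁₂, h₂₁]

namespace TorsionPair

variable {T F : A → Prop}

lemma isZero_of_mem (h : TorsionPair T F) {X : A} (hT : T X) (hF : F X) : IsZero X :=
  (IsZero.iff_id_eq_zero X).2 (h.hom_zero X X hT hF (𝟙 X))

lemma isIso_of_epi_of_torsion (h : TorsionPair T F) {X Y S : A} (p : X ⟶ Y) [Epi p]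
    (hX : T X) (g : S ⟶ Y) [Mono g] (hg : F (cokernel g)) : IsIso g := by
  have hπ : cokernel.π g = 0 := by
    rw [← cancel_epi p, comp_zero]
    exact h.hom_zero X _ hX hg _
  have : Epi g := Abelian.epi_of_cokernel_π_eq_zero g hπ
  exact isIso_of_mono_of_epi g

lemma mono_comp_cokernel_π (h : TorsionPair T F) (hT : ClosedUnderSubobjects T)
    {T₀ X S : A} (f : T₀ ⟶ X) [Mono f] (hT₀ : T T₀) (g : S ⟶ X) [Mono g] (hS : F S) :
    Mono (g ≫ cokernel.π f) := by
  have hcond : (kernel.ι (g ≫ cokernel.π f) ≫ g) ≫ cokernel.π f = 0 := by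
    rw [Category.assoc]; exact kernel.condition _
  -- the kernel embeds into `T₀`, so it lies in `T`
  have hlift : Mono (Abelian.monoLift f _ hcond) := by
    have : Mono (Abelian.monoLift f _ hcond ≫ f) := by
      rw [Abelian.monoLift_comp]; infer_instance
    exact mono_of_mono _ f
  have hK : T (kernel (g ≫ cokernel.π f)) := hT _ _ _ hlift hT₀
  exact Abelian.mono_of_kernel_ι_eq_zero _ (h.hom_zero _ _ hK hS _)

lemma epi_comp_of_epi (h : TorsionPair T F) (hF : ClosedUnderQuotients F)
    {S X C : A} (g : S ⟶ X) (hg : F (cokernel g)) (p : X ⟶ C) [Epi p] (hC : T C) :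
    Epi (g ≫ p) := by
  have hdesc : g ≫ p ≫ cokernel.π (g ≫ p) = 0 := by
    rw [← Category.assoc]; exact cokernel.condition _
  -- `cokernel (g ≫ p)` is a quotient of `cokernel g`, so it lies in `F`
  have hepi : Epi (cokernel.desc g (p ≫ cokernel.π (g ≫ p)) hdesc) :=
    epi_of_epi_fac (cokernel.π_desc g _ hdesc)
  have hFc : F (cokernel (g ≫ p)) := hF _ _ _ hepi hg
  exact Abelian.epi_of_cokernel_π_eq_zero _ (h.hom_zero _ _ hC hFc _)

end TorsionPair

variable {U V W : A → Prop}

lemma hom_eq_zero_of_torsionPair_of_torsionPair (h₁ : TorsionPair U V) (h₂ : TorsionPair V W)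
    (hU : ClosedUnderSubobjects U) {X Y : A} (hX : V X) (hY : U Y) (f : X ⟶ Y) : f = 0 := by
  obtain ⟨S, g, hg, hS, hco⟩ := h₂.decomp (Abelian.image f)
  have : IsIso g := h₂.isIso_of_epi_of_torsion (Abelian.factorThruImage f) hX g hco
  have hSU : U S := hU _ _ (g ≫ Abelian.image.ι f) inferInstance hY
  have hI : IsZero (Abelian.image f) := (h₁.isZero_of_mem hSU hS).of_iso (asIso g).symm
  rw [← Abelian.image.fac f, hI.eq_of_src (Abelian.image.ι f) 0, comp_zero]

lemma exists_section_cokernel_π (h₁ : TorsionPair U V) (h₂ : TorsionPair V W)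
    (hU : ClosedUnderSubobjects U) (hW : ClosedUnderQuotients W)
    {T₀ X : A} (f : T₀ ⟶ X) [Mono f] (hT : U T₀) (hC : V (cokernel f)) :
    ∃ s : cokernel f ⟶ X, s ≫ cokernel.π f = 𝟙 _ := by
  obtain ⟨S, g, hg, hS, hco⟩ := h₂.decomp X
  have : Mono (g ≫ cokernel.π f) := h₁.mono_comp_cokernel_π hU f hT g hS
  have : Epi (g ≫ cokernel.π f) := h₂.epi_comp_of_epi hW g hco _ hC
  have : IsIso (g ≫ cokernel.π f) := isIso_of_mono_of_epi _
  exact ⟨inv (g ≫ cokernel.π f) ≫ g, by rw [Category.assoc, IsIso.inv_hom_id]⟩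

lemma nonempty_iso_biprod_cokernel (h₁ : TorsionPair U V) (h₂ : TorsionPair V W)
    (hU : ClosedUnderSubobjects U) (hW : ClosedUnderQuotients W)
    {T₀ X : A} (f : T₀ ⟶ X) [Mono f] (hT : U T₀) (hC : V (cokernel f)) :
    Nonempty (X ≅ T₀ ⊞ cokernel f) := by
  obtain ⟨s, hs⟩ := exists_section_cokernel_π h₁ h₂ hU hW f hT hC
  let S := ShortComplex.mk f (cokernel.π f) (cokernel.condition f)
  have hS : S.Exact := S.exact_of_g_is_cokernel (cokernelIsCokernel f)
  exact ⟨(ShortComplex.Splitting.ofExactOfSection S hS s hs inferInstance).isoBinaryBiproduct⟩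

variable (U V) in
noncomputable def biprodFunctor :
    ObjectProperty.FullSubcategory U × ObjectProperty.FullSubcategory V ⥤ A where
  obj P := P.1.obj ⊞ P.2.obj
  map φ := biprod.map φ.1.hom φ.2.hom

noncomputable def biprodFunctorFullyFaithful (h₁ : TorsionPair U V) (h₂ : TorsionPair V W)
    (hU : ClosedUnderSubobjects U) : (biprodFunctor U V).FullyFaithful where
  preimage φ := (ObjectProperty.homMk (biprod.inl ≫ φ ≫ biprod.fst),
    ObjectProperty.homMk (biprod.inr ≫ φ ≫ biprod.snd))
  map_preimage {P Q} φ :=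
    (biprod.eq_map_of_inl_snd_eq_zero_of_inr_fst_eq_zero φ
      (h₁.hom_zero _ _ P.1.property Q.2.property _)
      (hom_eq_zero_of_torsionPair_of_torsionPair h₁ h₂ hU P.2.property Q.1.property _)).symm
  preimage_map φ := by ext <;> simp [biprodFunctor]

lemma biprodFunctor_essSurj (h₁ : TorsionPair U V) (h₂ : TorsionPair V W)
    (hU : ClosedUnderSubobjects U) (hW : ClosedUnderQuotients W) :
    (biprodFunctor U V).EssSurj where
  mem_essImage X := by
    obtain ⟨T₀, f, hf, hT, hC⟩ := h₁.decomp X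
    obtain ⟨e⟩ := nonempty_iso_biprod_cokernel h₁ h₂ hU hW f hT hC
    exact ⟨(⟨T₀, hT⟩, ⟨cokernel f, hC⟩), ⟨e.symm⟩⟩

lemma biprodFunctor_isEquivalence (h₁ : TorsionPair U V) (h₂ : TorsionPair V W)
    (hU : ClosedUnderSubobjects U) (hW : ClosedUnderQuotients W) :
    (biprodFunctor U V).IsEquivalence :=
  have := (biprodFunctorFullyFaithful h₁ h₂ hU).full
  have := (biprodFunctorFullyFaithful h₁ h₂ hU).faithful
  have := biprodFunctor_essSurj h₁ h₂ hU hW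
  { }

/-- under the hypotheses of Statement 8, `U ∩ V = {0}` and
`X ↦ (X_U, X^V)` defines an equivalence `A ≌ U × V`. -/
theorem stmt10 (U V W : A → Prop) (h₁ : TorsionPair U V) (h₂ : TorsionPair V W)
    (hU : ClosedUnderSubobjects U) (hW : ClosedUnderQuotients W) :
    (∀ X : A, U X → V X → IsZero X) ∧
    ∃ E : A ≌ (ObjectProperty.FullSubcategory U × ObjectProperty.FullSubcategory V),
      ∀ (X T₀ : A) (f : T₀ ⟶ X), Mono f → U T₀ → V (cokernel f) →
        Nonempty ((E.functor.obj X).1.obj ≅ T₀) ∧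
        Nonempty ((E.functor.obj X).2.obj ≅ cokernel f) := by
  refine ⟨fun X => h₁.isZero_of_mem, ?_⟩
  have := biprodFunctor_isEquivalence h₁ h₂ hU hW
  let G := (biprodFunctor U V).asEquivalence
  refine ⟨G.symm, fun X T₀ f hf hT hC => ?_⟩
  obtain ⟨e⟩ := nonempty_iso_biprod_cokernel h₁ h₂ hU hW f hT hC
  let Q : ObjectProperty.FullSubcategory U × ObjectProperty.FullSubcategory V :=
    (⟨T₀, hT⟩, ⟨cokernel f, hC⟩)
  let i : G.inverse.obj X ≅ Q := G.inverse.mapIso e ≪≫ G.unitIso.symm.app Q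
  exact ⟨⟨(ObjectProperty.ι U).mapIso ((CategoryTheory.Prod.fst _ _).mapIso i)⟩,
    ⟨(ObjectProperty.ι V).mapIso ((CategoryTheory.Prod.snd _ _).mapIso i)⟩⟩
end
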